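/- For every positive integer n, the number E₃(n) of two-color partitions of n counted by E(n) having an odd total number of parts equals p̄ₒ(n)/2 − (−1)ⁿ if n is a perfect square, and equals p̄ₒ(n)/2 otherwise. (Equivalently, as integers, 2·E₃(n) = p̄ₒ(n) − 2·(−1)ⁿ if n is a square and 2·E₃(n) = p̄ₒ(n) otherwise.) -/

import Mathlib

/-!
With `E(n)` the number of all pairs `(g, b)` and `T(n) = ∑ (-1) ^ (|g| + |b|)`, we have
`2 E₃(n) = E(n) - T(n)`. Euler's theorem (distinct parts are equinumerous with odd parts)
replaces `b` by a multiset of odd parts, so `E(n) = p̄ₒ(n)`. The signed count `T(n)` is the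
`n`-th coefficient of `(q; q²)_∞² (q²; q²)_∞ = ∑_{k ∈ ℤ} (-1) ^ k q ^ (k²)` (Gauss). We get
this from the finite Jacobi triple product
`∏_{j < N} (1 + z q^(2j+1)) (1 + z⁻¹ q^(2j+1)) = ∑_{|k| ≤ N} z^k q^(k²) [2N, N+k]_{q²}`
at `z = -1`: multiplied by `(q²; q²)_N`, the `k`-th term is `(-1)^k q^(k²)` modulo
`q^(k² + 2(N - |k| + 1))`, so for `n ≤ N` only the terms with `k² = n` reach `q^n`.
-/

open Polynomial Finset

noncomputable section

namespace TwoColorPartitions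

/-! ### Gaussian binomial coefficients -/

def gaussBinom : ℕ → ℕ → ℤ[X]
  | _, 0 => 1
  | 0, _ + 1 => 0
  | n + 1, k + 1 => gaussBinom n k + X ^ (k + 1) * gaussBinom n (k + 1)

/-- `(q; q)_m`. -/
def qPochhammer (m : ℕ) : ℤ[X] := ∏ i ∈ range m, (1 - X ^ (i + 1))

@[simp] theorem gaussBinom_zero_right (n : ℕ) : gaussBinom n 0 = 1 := by cases n <;> rfl

@[simp] theorem gaussBinom_zero_succ (k : ℕ) : gaussBinom 0 (k + 1) = 0 := rfl

theorem gaussBinom_succ_succ (n k : ℕ) :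
    gaussBinom (n + 1) (k + 1) = gaussBinom n k + X ^ (k + 1) * gaussBinom n (k + 1) := rfl

theorem gaussBinom_eq_zero_of_lt {n k : ℕ} (h : n < k) : gaussBinom n k = 0 := by
  induction n generalizing k with
  | zero => obtain ⟨k, rfl⟩ := Nat.exists_eq_succ_of_ne_zero h.ne'; rfl
  | succ n ih =>
    obtain ⟨k, rfl⟩ := Nat.exists_eq_succ_of_ne_zero (Nat.ne_zero_of_lt h)
    rw [gaussBinom_succ_succ, ih (by omega), ih (by omega), mul_zero, add_zero]

@[simp] theorem gaussBinom_self (n : ℕ) : gaussBinom n n = 1 := by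
  induction n with
  | zero => rfl
  | succ n ih => rw [gaussBinom_succ_succ, ih, gaussBinom_eq_zero_of_lt n.lt_succ_self]; simp

@[simp] theorem qPochhammer_zero : qPochhammer 0 = 1 := rfl

theorem qPochhammer_succ (m : ℕ) : qPochhammer (m + 1) = qPochhammer m * (1 - X ^ (m + 1)) :=
  prod_range_succ _ _

theorem qPochhammer_ne_zero (m : ℕ) : qPochhammer m ≠ 0 := by
  refine prod_ne_zero_iff.mpr fun i _ h => ?_
  simpa using congrArg (eval 0) h

theorem gaussBinom_mul_qPochhammer (a b : ℕ) :
    gaussBinom (a + b) a * qPochhammer a * qPochhammer b = qPochhammer (a + b) := by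
  induction h : a + b generalizing a b with
  | zero =>
    obtain ⟨rfl, rfl⟩ : a = 0 ∧ b = 0 := by omega
    simp
  | succ n ih =>
    obtain _ | a := a
    · simp [← h]
    obtain _ | b := b
    · simp [← h]
    have h₁ := ih a (b + 1) (by omega)
    have h₂ := ih (a + 1) b (by omega)
    have hX : (X : ℤ[X]) ^ (a + 1) * X ^ (b + 1) = X ^ (n + 1) := by
      rw [← pow_add, show a + 1 + (b + 1) = n + 1 by omega]
    rw [qPochhammer_succ] at h₁ h₂
    rw [gaussBinom_succ_succ, qPochhammer_succ, qPochhammer_succ, qPochhammer_succ]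
    linear_combination (1 - X ^ (a + 1)) * h₁ + X ^ (a + 1) * (1 - X ^ (b + 1)) * h₂ -
      qPochhammer n * hX

theorem gaussBinom_symm (a b : ℕ) : gaussBinom (a + b) a = gaussBinom (a + b) b := by
  refine mul_right_cancel₀ (mul_ne_zero (qPochhammer_ne_zero a) (qPochhammer_ne_zero b)) ?_
  rw [← mul_assoc, gaussBinom_mul_qPochhammer, mul_comm (qPochhammer a), ← mul_assoc, add_comm,
    gaussBinom_mul_qPochhammer]

theorem gaussBinom_succ_succ' (a b : ℕ) :
    gaussBinom (a + b + 1) (a + 1) = X ^ b * gaussBinom (a + b) a + gaussBinom (a + b) (a + 1) := by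
  obtain _ | b := b
  · simp [gaussBinom_eq_zero_of_lt (Nat.lt_succ_self a)]
  have h₁ := gaussBinom_symm (a + 1) (b + 1)
  have h₂ := gaussBinom_symm a (b + 1)
  have h₃ := gaussBinom_symm (a + 1) b
  rw [show a + 1 + (b + 1) = a + (b + 1) + 1 by omega] at h₁
  rw [show a + 1 + b = a + (b + 1) by omega] at h₃
  rw [h₁, show a + (b + 1) + 1 = (a + b + 1) + 1 by omega, gaussBinom_succ_succ,
    show a + b + 1 = a + (b + 1) by omega, ← h₂, ← h₃]
  ring

theorem gaussBinom_add_two (n k : ℕ) :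
    gaussBinom (n + 2) (k + 2) = X ^ (n - k) * gaussBinom n k +
      (1 + X ^ (n + 1)) * gaussBinom n (k + 1) + X ^ (k + 2) * gaussBinom n (k + 2) := by
  obtain h | h := le_or_gt k n
  · obtain ⟨b, rfl⟩ := Nat.exists_eq_add_of_le h
    rw [show k + b + 2 = (k + 1) + b + 1 by omega, gaussBinom_succ_succ',
      show k + 1 + b = k + b + 1 by omega, gaussBinom_succ_succ, gaussBinom_succ_succ,
      Nat.add_sub_cancel_left]
    ring
  · simp [gaussBinom_eq_zero_of_lt, h, show n + 2 < k + 2 by omega, show n < k + 1 by omega,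
      show n < k + 2 by omega]

theorem gaussBinom_add_two_one (n : ℕ) :
    gaussBinom (n + 2) 1 = 1 + X ^ (n + 1) + X * gaussBinom n 1 := by
  have h := gaussBinom_succ_succ' 0 (n + 1)
  rw [zero_add, zero_add, gaussBinom_zero_right, gaussBinom_succ_succ n 0] at h
  rw [h, gaussBinom_zero_right]
  ring

/-! ### The finite Jacobi triple product -/

/-- The `N`-th finite Jacobi triple product multiplied by `z ^ N`, in `ℤ[q][z]`:
`∏_{j < N} (1 + z q^(2j+1)) (z + q^(2j+1))`. -/
def jacobiProd (N : ℕ) : ℤ[X][X] :=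
  ∏ j ∈ range N, (1 + C ((X : ℤ[X]) ^ (2 * j + 1)) * X) * (X + C (X ^ (2 * j + 1)))

def jacobiCoeff (N i : ℕ) : ℤ[X] :=
  X ^ (((i : ℤ) - N).natAbs ^ 2) * expand ℤ 2 (gaussBinom (2 * N) i)

theorem jacobiCoeff_eq_zero_of_lt {N i : ℕ} (h : 2 * N < i) : jacobiCoeff N i = 0 := by
  rw [jacobiCoeff, gaussBinom_eq_zero_of_lt h, map_zero, mul_zero]

theorem jacobiCoeff_succ_zero (N : ℕ) :
    jacobiCoeff (N + 1) 0 = X ^ (2 * N + 1) * jacobiCoeff N 0 := by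
  simp only [jacobiCoeff, gaussBinom_zero_right, map_one, mul_one, ← pow_add]
  congr 1
  zify
  push_cast [sq_abs]
  ring

theorem jacobiCoeff_succ_one (N : ℕ) : jacobiCoeff (N + 1) 1 =
    X ^ (2 * N + 1) * jacobiCoeff N 1 + (1 + (X ^ (2 * N + 1)) ^ 2) * jacobiCoeff N 0 := by
  simp only [jacobiCoeff, show 2 * (N + 1) = 2 * N + 2 by ring, gaussBinom_add_two_one,
    gaussBinom_zero_right, map_add, map_mul, map_one, map_pow, expand_X]
  have h₀ : ((1 : ℕ) - ((N + 1 : ℕ) : ℤ)).natAbs = ((0 : ℕ) - (N : ℤ)).natAbs := by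
    push_cast; ring_nf
  have h₁ : (X : ℤ[X]) ^ (((0 : ℕ) - (N : ℤ)).natAbs ^ 2) * X ^ 2 =
      X ^ (2 * N + 1) * X ^ (((1 : ℕ) - (N : ℤ)).natAbs ^ 2) := by
    simp only [← pow_add]
    congr 1
    zify
    push_cast [sq_abs]
    ring
  rw [h₀]
  linear_combination expand ℤ 2 (gaussBinom (2 * N) 1) * h₁

theorem jacobiCoeff_succ_add_two (N j : ℕ) : jacobiCoeff (N + 1) (j + 2) =
    X ^ (2 * N + 1) * jacobiCoeff N (j + 2) + (1 + (X ^ (2 * N + 1)) ^ 2) * jacobiCoeff N (j + 1) +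
      X ^ (2 * N + 1) * jacobiCoeff N j := by
  obtain hj | hj := le_or_gt j (2 * N)
  · simp only [jacobiCoeff, show 2 * (N + 1) = 2 * N + 2 by ring, gaussBinom_add_two, map_add,
      map_mul, map_one, map_pow, expand_X]
    have h₀ : ((j + 2 : ℕ) - ((N + 1 : ℕ) : ℤ)).natAbs = ((j + 1 : ℕ) - (N : ℤ)).natAbs := by
      push_cast; ring_nf
    have h₁ : (X : ℤ[X]) ^ (((j + 1 : ℕ) - (N : ℤ)).natAbs ^ 2) * (X ^ 2) ^ (j + 2) =
        X ^ (2 * N + 1) * X ^ (((j + 2 : ℕ) - (N : ℤ)).natAbs ^ 2) := by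
      simp only [← pow_add, ← pow_mul]
      congr 1
      zify
      push_cast [sq_abs]
      ring
    have h₂ : (X : ℤ[X]) ^ (((j + 1 : ℕ) - (N : ℤ)).natAbs ^ 2) * (X ^ 2) ^ (2 * N - j) =
        X ^ (2 * N + 1) * X ^ (((j : ℕ) - (N : ℤ)).natAbs ^ 2) := by
      simp only [← pow_add, ← pow_mul]
      congr 1
      zify [hj]
      push_cast [sq_abs]
      ring
    rw [h₀]
    linear_combination expand ℤ 2 (gaussBinom (2 * N) (j + 2)) * h₁ +
      expand ℤ 2 (gaussBinom (2 * N) j) * h₂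
  · simp [jacobiCoeff_eq_zero_of_lt, hj, show 2 * N < j + 1 by omega, show 2 * N < j + 2 by omega,
      show 2 * (N + 1) < j + 2 by omega]

theorem coeff_jacobiProd (N i : ℕ) : (jacobiProd N).coeff i = jacobiCoeff N i := by
  induction N generalizing i with
  | zero => obtain _ | i := i <;> simp [jacobiProd, jacobiCoeff, coeff_one]
  | succ N ih =>
    have hF : (1 + C ((X : ℤ[X]) ^ (2 * N + 1)) * X) * (X + C (X ^ (2 * N + 1))) =
        C (X ^ (2 * N + 1)) + C (1 + (X ^ (2 * N + 1)) ^ 2) * X + C (X ^ (2 * N + 1)) * X ^ 2 := by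
      simp only [map_add, map_one, map_pow]
      ring
    rw [jacobiProd, prod_range_succ, hF, ← jacobiProd]
    obtain _ | _ | j := i <;>
      simp only [mul_add, ← mul_assoc, coeff_add, coeff_mul_C, coeff_mul_X_pow', coeff_mul_X,
        coeff_mul_X_zero, ih, Nat.reduceLeDiff, le_add_iff_nonneg_left, zero_le, if_true, if_false,
        add_zero]
    · rw [jacobiCoeff_succ_zero]; ring
    · rw [jacobiCoeff_succ_one]; ring
    · rw [jacobiCoeff_succ_add_two, show j + 1 + 1 - 2 = j by omega]; ring

theorem prod_one_sub_X_pow_odd_sq (N : ℕ) :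
    (∏ j ∈ range N, (1 - (X : ℤ[X]) ^ (2 * j + 1))) ^ 2 =
      (-1) ^ N * ∑ i ∈ range (2 * N + 1), jacobiCoeff N i * (-1) ^ i := by
  have hdeg : (jacobiProd N).natDegree < 2 * N + 1 :=
    Nat.lt_succ_of_le <| natDegree_le_iff_coeff_eq_zero.mpr
      fun i hi => by rw [coeff_jacobiProd, jacobiCoeff_eq_zero_of_lt hi]
  have heval : (jacobiProd N).eval (-1) =
      (-1) ^ N * (∏ j ∈ range N, (1 - (X : ℤ[X]) ^ (2 * j + 1))) ^ 2 := by
    rw [← prod_pow, show ((-1) ^ N : ℤ[X]) = ∏ _j ∈ range N, -1 by simp, ← prod_mul_distrib]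
    simp only [jacobiProd, eval_prod, eval_mul, eval_add, eval_one, eval_C, eval_X]
    exact prod_congr rfl fun j _ => by ring
  simp only [eval_eq_sum_range' hdeg, coeff_jacobiProd] at heval
  rw [heval, ← mul_assoc, ← pow_add, ← two_mul, pow_mul, neg_one_sq, one_pow, one_mul]

/-! ### Gauss's identity, truncated -/

theorem X_pow_dvd_prod_one_sub_X_pow_sub_one {R ι : Type*} [CommRing R] (s : Finset ι)
    (d : ι → ℕ) {M : ℕ} (h : ∀ j ∈ s, M ≤ d j) :
    (X : R[X]) ^ M ∣ ∏ j ∈ s, (1 - X ^ d j) - 1 := by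
  refine prod_induction _ (fun p => (X : R[X]) ^ M ∣ p - 1) (fun p q hp hq => ?_) (by simp)
    fun j hj => ?_
  · rw [show p * q - 1 = (p - 1) * q + (q - 1) by ring]
    exact dvd_add (dvd_mul_of_dvd_left hp q) hq
  · rw [sub_sub_cancel_left, dvd_neg]
    exact pow_dvd_pow X (h j hj)

theorem X_pow_dvd_gaussBinom_mul_qPochhammer_sub_one {a b N : ℕ} (hb : b ≤ N) (ha : N ≤ a) :
    (X : ℤ[X]) ^ (b + 1) ∣ gaussBinom (a + b) a * qPochhammer N - 1 := by
  set U := ∏ j ∈ Ico a (a + b), (1 - (X : ℤ[X]) ^ (j + 1))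
  set V := ∏ j ∈ Ico b N, (1 - (X : ℤ[X]) ^ (j + 1))
  have hU : qPochhammer (a + b) = qPochhammer a * U :=
    (prod_range_mul_prod_Ico _ (Nat.le_add_right a b)).symm
  have hV : qPochhammer N = qPochhammer b * V := (prod_range_mul_prod_Ico _ hb).symm
  have hGU : gaussBinom (a + b) a * qPochhammer b = U := by
    refine mul_left_cancel₀ (qPochhammer_ne_zero a) ?_
    rw [← hU, ← gaussBinom_mul_qPochhammer]
    ring
  have hU₁ : (X : ℤ[X]) ^ (b + 1) ∣ U - 1 :=
    X_pow_dvd_prod_one_sub_X_pow_sub_one _ _ fun j hj => by simp at hj; omega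
  have hV₁ : (X : ℤ[X]) ^ (b + 1) ∣ V - 1 :=
    X_pow_dvd_prod_one_sub_X_pow_sub_one _ _ fun j hj => by simp at hj; omega
  rw [hV, ← mul_assoc, hGU, show U * V - 1 = (U - 1) * V + (V - 1) by ring]
  exact dvd_add (dvd_mul_of_dvd_left hU₁ V) hV₁

theorem coeff_X_pow_mul_of_dvd_sub_one {R : Type*} [CommRing R] {W : R[X]} {M e n : ℕ}
    (hW : X ^ M ∣ W - 1) (hn : n < e + M) :
    (X ^ e * W).coeff n = if n = e then 1 else 0 := by
  obtain ⟨g, hg⟩ := hW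
  rw [show W = 1 + X ^ M * g by rw [← hg]; ring, mul_add, mul_one, ← mul_assoc, ← pow_add,
    coeff_add, coeff_X_pow, coeff_X_pow_mul', if_neg (show ¬e + M ≤ n by omega), add_zero]

theorem coeff_jacobiCoeff_mul_expand_qPochhammer {N i n : ℕ} (hi : i ≤ 2 * N) (hn : n ≤ N) :
    (jacobiCoeff N i * expand ℤ 2 (qPochhammer N)).coeff n =
      if n = ((i : ℤ) - N).natAbs ^ 2 then 1 else 0 := by
  set d := ((i : ℤ) - N).natAbs
  have hdvd : (X : ℤ[X]) ^ (N - d + 1) ∣ gaussBinom (2 * N) i * qPochhammer N - 1 := by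
    have h := X_pow_dvd_gaussBinom_mul_qPochhammer_sub_one (a := N + d) (b := N - d) (N := N)
      (by omega) (by omega)
    obtain hi | hi : i = N + d ∨ i = N - d := by omega
    · rwa [show N + d + (N - d) = 2 * N by omega, ← hi] at h
    · rw [gaussBinom_symm, show N + d + (N - d) = 2 * N by omega] at h
      rwa [hi]
  have hexp := map_dvd (expand ℤ 2) hdvd
  rw [map_sub, map_one, map_pow, expand_X, ← pow_mul] at hexp
  rw [jacobiCoeff, mul_assoc, ← map_mul]
  refine coeff_X_pow_mul_of_dvd_sub_one hexp ?_
  have hdN : d ≤ N := by omega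
  have hd : d ≤ d ^ 2 := Nat.le_self_pow two_ne_zero d
  show n < d ^ 2 + 2 * (N - d + 1)
  omega

theorem expand_qPochhammer (N : ℕ) :
    expand ℤ 2 (qPochhammer N) = ∏ j ∈ range N, (1 - (X : ℤ[X]) ^ (2 * j + 2)) := by
  simp only [qPochhammer, map_prod, map_sub, map_one, map_pow, expand_X, ← pow_mul]
  exact prod_congr rfl fun j _ => by ring_nf

theorem neg_one_pow_mul_self {R : Type*} [Monoid R] [HasDistribNeg R] (r : ℕ) :
    (-1 : R) ^ (r * r) = (-1) ^ r := by
  rcases Nat.even_or_odd r with h | h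
  · rw [h.neg_one_pow, (h.mul_right r).neg_one_pow]
  · rw [h.neg_one_pow, (h.mul h).neg_one_pow]

theorem sum_range_ite_eq_natAbs_sq {n N : ℕ} (hn : 0 < n) (hN : n ≤ N) :
    ∑ i ∈ range (2 * N + 1), (if n = ((i : ℤ) - N).natAbs ^ 2 then (-1 : ℤ) ^ i else 0) =
      if IsSquare n then 2 * (-1) ^ (N + n) else 0 := by
  split_ifs with hsq
  · obtain ⟨r, rfl⟩ := hsq
    have hr : 0 < r := Nat.pos_of_mul_pos_left hn
    have hrN : r ≤ N := (Nat.le_mul_self r).trans hN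
    have hsq_iff : ∀ i : ℕ, r * r = ((i : ℤ) - N).natAbs ^ 2 ↔ i = N - r ∨ i = N + r := by
      intro i
      rw [sq, Nat.mul_self_inj]
      omega
    have hpar : (-1 : ℤ) ^ (N + r) = (-1) ^ (N - r) := by
      rw [show N + r = N - r + 2 * r by omega, pow_add, pow_mul]
      simp
    rw [sum_eq_add_of_mem (N - r) (N + r) (by simp; omega) (by simp; omega) (by omega)
      fun c _ hc => if_neg fun h => by have := (hsq_iff c).mp h; omega,
      if_pos ((hsq_iff _).mpr (Or.inl rfl)), if_pos ((hsq_iff _).mpr (Or.inr rfl)),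
      pow_add _ N (r * r), neg_one_pow_mul_self, ← pow_add, hpar]
    ring
  · refine sum_eq_zero fun i _ => if_neg fun h => hsq ⟨_, h.trans (sq _)⟩

theorem coeff_prod_one_sub_X_pow_odd_sq_mul {n N : ℕ} (hn : 0 < n) (hN : n ≤ N) :
    ((∏ j ∈ range N, (1 - (X : ℤ[X]) ^ (2 * j + 1))) ^ 2 *
        ∏ j ∈ range N, (1 - (X : ℤ[X]) ^ (2 * j + 2))).coeff n =
      if IsSquare n then 2 * (-1) ^ n else 0 := by
  rw [prod_one_sub_X_pow_odd_sq, ← expand_qPochhammer, mul_assoc, sum_mul]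
  simp only [show ∀ k, ((-1) ^ k : ℤ[X]) = C ((-1) ^ k) by simp, coeff_C_mul, finsetSum_coeff,
    mul_right_comm _ (C _), coeff_mul_C]
  rw [sum_congr rfl fun i hi => by
    rw [coeff_jacobiCoeff_mul_expand_qPochhammer (Nat.lt_succ_iff.mp (mem_range.mp hi)) hN,
      ite_mul, one_mul, zero_mul], sum_range_ite_eq_natAbs_sq hn hN]
  split_ifs
  · rw [mul_left_comm, ← pow_add, ← add_assoc, pow_add, Even.neg_one_pow ⟨N, rfl⟩, one_mul]
  · rw [mul_zero]

/-! ### Counting two-colour partitions -/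

theorem prod_one_sub_X_pow {R : Type*} [CommRing R] (s : Finset ℕ) :
    ∏ j ∈ s, (1 - (X : R[X]) ^ j) = ∑ A ∈ s.powerset, C ((-1) ^ #A) * X ^ (∑ j ∈ A, j) := by
  simp only [sub_eq_add_neg, prod_one_add, prod_neg, prod_pow_eq_pow_sum _ (fun j => j),
    map_pow, map_neg, map_one]

theorem coeff_prod_one_sub_X_pow_mul_prod {R : Type*} [CommRing R] (s t : Finset ℕ) (n : ℕ) :
    ((∏ j ∈ s, (1 - (X : R[X]) ^ j)) * ∏ j ∈ t, (1 - (X : R[X]) ^ j)).coeff n =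
      ∑ p ∈ (s.powerset ×ˢ t.powerset).filter (fun p => ∑ j ∈ p.1, j + ∑ j ∈ p.2, j = n),
        (-1) ^ (#p.1 + #p.2) := by
  rw [prod_one_sub_X_pow, prod_one_sub_X_pow, sum_mul_sum, ← sum_product', finsetSum_coeff,
    sum_filter]
  refine sum_congr rfl fun p _ => ?_
  rw [mul_mul_mul_comm, ← map_mul, ← pow_add, ← pow_add, coeff_C_mul_X_pow]
  exact if_congr eq_comm rfl rfl

theorem two_mul_card_filter_odd {ι : Type*} (s : Finset ι) (f : ι → ℕ) :
    2 * (#(s.filter fun x => Odd (f x)) : ℤ) = #s - ∑ x ∈ s, (-1) ^ f x := by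
  rw [natCast_card_filter, mul_sum, ← nsmul_one, ← sum_const, ← sum_sub_distrib]
  refine sum_congr rfl fun x _ => ?_
  rcases Nat.even_or_odd (f x) with h | h
  · simp [h.neg_one_pow, Nat.not_odd_iff_even.mpr h]
  · simp [h.neg_one_pow, h]

def finsetEquivDistincts (m : ℕ) :
    {b : {b : Finset ℕ // ∀ x ∈ b, 0 < x} // ∑ x ∈ b.1, x = m} ≃ Nat.Partition.distincts m where
  toFun b := ⟨⟨b.1.1.val, fun hx => b.1.2 _ hx, (sum_val _).trans b.2⟩,
    by simp [Nat.Partition.distincts, b.1.1.nodup]⟩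
  invFun p := ⟨⟨⟨p.1.parts, (mem_filter.mp p.2).2⟩, fun _ hx => p.1.parts_pos hx⟩,
    (sum_val _).symm.trans p.1.parts_sum⟩
  left_inv _ := rfl
  right_inv _ := rfl

def multisetEquivOdds (m : ℕ) :
    {ν : {ν : Multiset ℕ // ∀ x ∈ ν, Odd x ∧ 0 < x} // ν.1.sum = m} ≃ Nat.Partition.odds m where
  toFun ν := ⟨⟨ν.1.1, fun hx => (ν.1.2 _ hx).2, ν.2⟩, by
    simpa [Nat.Partition.odds, Nat.Partition.restricted] using fun x hx => (ν.1.2 x hx).1⟩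
  invFun p := ⟨⟨p.1.parts, fun x hx => ⟨Nat.not_even_iff_odd.mp ((mem_filter.mp p.2).2 x hx),
    p.1.parts_pos hx⟩⟩, p.1.parts_sum⟩
  left_inv _ := rfl
  right_inv _ := rfl

theorem exists_equiv_distinct_odd_sum_eq :
    ∃ e : {b : Finset ℕ // ∀ x ∈ b, 0 < x} ≃ {ν : Multiset ℕ // ∀ x ∈ ν, Odd x ∧ 0 < x},
      ∀ b, (e b).1.sum = ∑ x ∈ b.1, x := by
  have fiber (m : ℕ) : Nat.Partition.distincts m ≃ Nat.Partition.odds m :=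
    Fintype.equivOfCardEq (by simp [Nat.Partition.card_odds_eq_card_distincts])
  refine ⟨(Equiv.sigmaFiberEquiv _).symm.trans ((Equiv.sigmaCongrRight fun m =>
    (finsetEquivDistincts m).trans ((fiber m).trans (multisetEquivOdds m).symm)).trans
    (Equiv.sigmaFiberEquiv fun ν : {ν : Multiset ℕ // ∀ x ∈ ν, Odd x ∧ 0 < x} => ν.1.sum)),
    fun b => (((finsetEquivDistincts _).trans ((fiber _).trans (multisetEquivOdds _).symm))
      ⟨b, rfl⟩).2⟩

theorem natCard_finset_eq_natCard_multiset {α : Type*} (P : α → Prop) (w : α → ℕ) (n : ℕ) :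
    Nat.card {p : α × Finset ℕ // P p.1 ∧ (∀ x ∈ p.2, 0 < x) ∧ w p.1 + ∑ x ∈ p.2, x = n} =
      Nat.card {q : α × Multiset ℕ //
        P q.1 ∧ (∀ x ∈ q.2, Odd x ∧ 0 < x) ∧ w q.1 + q.2.sum = n} := by
  obtain ⟨e, he⟩ := exists_equiv_distinct_odd_sum_eq
  exact Nat.card_congr
    { toFun := fun p => ⟨(p.1.1, (e ⟨p.1.2, p.2.2.1⟩).1), p.2.1, (e _).2, by
        rw [he]; exact p.2.2.2⟩
      invFun := fun q => ⟨(q.1.1, (e.symm ⟨q.1.2, q.2.2.1⟩).1), q.2.1, (e.symm _).2, by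
        rw [← he, e.apply_symm_apply]; exact q.2.2.2⟩
      left_inv := fun p => by simp
      right_inv := fun q => by simp }

def firstOdds (n : ℕ) : Finset ℕ := (range n).image fun j => 2 * j + 1

def firstEvens (n : ℕ) : Finset ℕ := (range n).image fun j => 2 * j + 2

/-- The pairs counted by `E(n)`; the parts are drawn from the first `n` odd and even numbers so
that the signed count is a coefficient of `(q; q²)_n² (q²; q²)_n`. -/
def twoColorPartitions (n : ℕ) : Finset (Finset ℕ × Finset ℕ) :=
  ((firstOdds n).powerset ×ˢ (firstOdds n ∪ firstEvens n).powerset).filter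
    fun p => ∑ x ∈ p.1, x + ∑ x ∈ p.2, x = n

theorem mem_twoColorPartitions {n : ℕ} {p : Finset ℕ × Finset ℕ} :
    p ∈ twoColorPartitions n ↔ (∀ x ∈ p.1, Odd x ∧ 0 < x) ∧ (∀ x ∈ p.2, 0 < x) ∧
      ∑ x ∈ p.1, x + ∑ x ∈ p.2, x = n := by
  have hle (s : Finset ℕ) {x : ℕ} (hx : x ∈ s) : x ≤ ∑ y ∈ s, y :=
    single_le_sum (f := fun y => y) (fun _ _ => Nat.zero_le _) hx
  simp only [twoColorPartitions, firstOdds, firstEvens, mem_filter, mem_product, mem_powerset,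
    subset_iff, mem_union, mem_image, mem_range]
  constructor
  · rintro ⟨⟨hodd, hall⟩, hsum⟩
    refine ⟨fun x hx => ?_, fun x hx => ?_, hsum⟩
    · obtain ⟨j, -, rfl⟩ := hodd hx
      exact ⟨odd_two_mul_add_one j, by omega⟩
    · rcases hall hx with ⟨j, -, rfl⟩ | ⟨j, -, rfl⟩ <;> omega
  · rintro ⟨hodd, hpos, hsum⟩
    refine ⟨⟨fun x hx => ?_, fun x hx => ?_⟩, hsum⟩
    · obtain ⟨⟨j, rfl⟩, -⟩ := hodd x hx
      exact ⟨j, by have := hle _ hx; omega, by ring⟩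
    · have := hle _ hx
      have := hpos x hx
      obtain ⟨j, rfl | rfl⟩ := Nat.even_or_odd' x
      · exact Or.inr ⟨j - 1, by omega, by omega⟩
      · exact Or.inl ⟨j, by omega, rfl⟩

theorem sum_neg_one_pow_card_twoColorPartitions {n : ℕ} (hn : 0 < n) :
    ∑ p ∈ twoColorPartitions n, (-1 : ℤ) ^ (#p.1 + #p.2) =
      if IsSquare n then 2 * (-1) ^ n else 0 := by
  have hodd : ∏ j ∈ firstOdds n, (1 - (X : ℤ[X]) ^ j) = ∏ j ∈ range n, (1 - X ^ (2 * j + 1)) :=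
    prod_image fun _ _ _ _ h => by omega
  have heven : ∏ j ∈ firstEvens n, (1 - (X : ℤ[X]) ^ j) = ∏ j ∈ range n, (1 - X ^ (2 * j + 2)) :=
    prod_image fun _ _ _ _ h => by omega
  have hdisj : Disjoint (firstOdds n) (firstEvens n) := by
    simp only [disjoint_left, firstOdds, firstEvens, mem_image]
    rintro _ ⟨i, -, rfl⟩ ⟨j, -, h⟩
    omega
  rw [twoColorPartitions, ← coeff_prod_one_sub_X_pow_mul_prod, prod_union hdisj, hodd, heven,
    ← mul_assoc, ← sq]
  exact coeff_prod_one_sub_X_pow_odd_sq_mul hn le_rfl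

end TwoColorPartitions

end

open TwoColorPartitions

/-- For `n ≥ 1`, `E₃(n) = p̄ₒ(n)/2 − (−1)ⁿ` if `n` is a perfect square
and `E₃(n) = p̄ₒ(n)/2` otherwise; equivalently, as integers,
`2·E₃(n) = p̄ₒ(n) − 2·(−1)ⁿ` if `n` is a square and `2·E₃(n) = p̄ₒ(n)` otherwise.
Here `E₃(n)` counts two-color partitions `(g, b)` of `n` (with `g` a finite set of
distinct odd positive integers and `b` a finite set of distinct positive integers)
whose total number of parts `|g| + |b|` is odd, and `p̄ₒ(n)` counts
overpartitions of `n` into odd parts. -/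
theorem two_color_odd_total_number_of_parts (n : ℕ) (hn : 0 < n) :
    2 * (Nat.card {p : Finset ℕ × Finset ℕ //
      ((∀ x ∈ p.1, Odd x ∧ 0 < x) ∧ (∀ x ∈ p.2, 0 < x) ∧
        (∑ x ∈ p.1, x) + (∑ x ∈ p.2, x) = n) ∧
      Odd (p.1.card + p.2.card)} : ℤ) =
    (if IsSquare n then
      (Nat.card {q : Finset ℕ × Multiset ℕ //
        (∀ x ∈ q.1, Odd x ∧ 0 < x) ∧ (∀ x ∈ q.2, Odd x ∧ 0 < x) ∧
        (∑ x ∈ q.1, x) + q.2.sum = n} : ℤ) - 2 * (-1) ^ n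
    else
      (Nat.card {q : Finset ℕ × Multiset ℕ //
        (∀ x ∈ q.1, Odd x ∧ 0 < x) ∧ (∀ x ∈ q.2, Odd x ∧ 0 < x) ∧
        (∑ x ∈ q.1, x) + q.2.sum = n} : ℤ)) := by
  have hodd : Nat.card {p : Finset ℕ × Finset ℕ //
      ((∀ x ∈ p.1, Odd x ∧ 0 < x) ∧ (∀ x ∈ p.2, 0 < x) ∧
        (∑ x ∈ p.1, x) + (∑ x ∈ p.2, x) = n) ∧ Odd (p.1.card + p.2.card)} =
      #((twoColorPartitions n).filter fun p => Odd (#p.1 + #p.2)) :=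
    Nat.subtype_card _ fun p => by rw [mem_filter, mem_twoColorPartitions]
  have hall : Nat.card {q : Finset ℕ × Multiset ℕ //
      (∀ x ∈ q.1, Odd x ∧ 0 < x) ∧ (∀ x ∈ q.2, Odd x ∧ 0 < x) ∧ (∑ x ∈ q.1, x) + q.2.sum = n} =
      #(twoColorPartitions n) :=
    (natCard_finset_eq_natCard_multiset (fun g => ∀ x ∈ g, Odd x ∧ 0 < x) (fun g => ∑ x ∈ g, x)
      n).symm.trans (Nat.subtype_card _ fun _ => mem_twoColorPartitions)
  rw [hodd, hall, two_mul_card_filter_odd, sum_neg_one_pow_card_twoColorPartitions hn]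
  split_ifs <;> ring
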